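/- Let α = √(2/π)·(1 − e^{−1/2}) + ∫_1^∞ √(2/π)·e^{−z²/2} dz and let c > 1/α. Let z₁, z₂, z₁', z₂' > 0, s, s' > 0, w > 0. Define F_{a,b}(r) = arcosh(1 + (r² + (a − b)²)/(2ab)), r = F_{z₁,z₂}(s), and assume r > 0, F_{z₁',z₂'}(s') ≥ c·r, and F_{z₁',z₂'}(s') < w. Set p₁ = 1 − (1/w)·∫_0^∞ √(2/π)e^{−z²/2}·F_{z₁,z₂}(s·z) dz and p₂ = 1 − (1/w)·∫_0^∞ √(2/π)e^{−z²/2}·F_{z₁',z₂'}(s'·z) dz. Then 0 < p₂ < p₁ < 1 and log(1/p₁)/log(1/p₂) ≤ 1/(α·c). -/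

import Mathlib

open Real MeasureTheory

/-- The inverse hyperbolic cosine. -/
noncomputable def arcosh (x : ℝ) : ℝ := Real.log (x + Real.sqrt (x ^ 2 - 1))

/-- The hyperbolic distance, in the Poincaré half-space model, between two points
with heights `a, b` whose horizontal coordinates are at Euclidean distance `r`. -/
noncomputable def F (a b r : ℝ) : ℝ :=
  _root_.arcosh (1 + (r ^ 2 + (a - b) ^ 2) / (2 * a * b))

/-- The constant `α = √(2/π)(1 - e^{-1/2}) + ∫_1^∞ √(2/π) e^{-z²/2} dz ≈ 0.63`. -/
noncomputable def alphaLSH : ℝ :=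
  Real.sqrt (2 / π) * (1 - Real.exp (-1 / 2)) +
    ∫ z in Set.Ioi (1 : ℝ), Real.sqrt (2 / π) * Real.exp (-z ^ 2 / 2)

open Set

/-!
Write `I = ∫₀^∞ φ(z) F_{a,b}(s z) dz` with `φ` the half-normal density, so that `p = 1 - I / w`,
and compare `I` with `F_{a,b}(s)` from both sides.
As a function of the squared distance `F_{a,b}` is concave, so it lies below its tangent line at
`s²`; since `E Z² = 1` for the half-normal law this gives `I ≤ F_{a,b}(s)`.
Writing `arcosh (1 + u) = 2 arsinh √(u / 2)`, concavity of `arsinh` gives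
`F_{a,b}(s z) ≥ z F_{a,b}(s)` for `z ≤ 1`, while `F_{a,b}(s z) ≥ F_{a,b}(s)` for `z ≥ 1`;
integrating, `I ≥ α F_{a,b}(s)`.
Hence, with `x = r / w`, `p₁ ≥ 1 - x` and `p₂ ≤ 1 - α c x`, and Bernoulli's inequality
`(1 - x) ^ (α c) ≥ 1 - α c x` turns this into the bound on `log (1 / p₁) / log (1 / p₂)`.
-/

theorem ConcaveOn.le_add_mul_sub_of_hasDerivAt {S : Set ℝ} {f : ℝ → ℝ} {f' x y : ℝ}
    (hf : ConcaveOn ℝ S f) (hx : x ∈ S) (hy : y ∈ S) (hd : HasDerivAt f f' x) :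
    f y ≤ f x + f' * (y - x) := by
  rcases lt_trichotomy y x with hyx | rfl | hxy
  · have := hf.le_slope_of_hasDerivAt hy hx hyx hd
    rw [slope_def_field, le_div_iff₀ (sub_pos.2 hyx)] at this
    linarith
  · simp
  · have := hf.slope_le_of_hasDerivAt hx hy hxy hd
    rw [slope_def_field, div_le_iff₀ (sub_pos.2 hxy)] at this
    linarith

theorem Real.concaveOn_arcosh : ConcaveOn ℝ (Ici 1) Real.arcosh := by
  refine AntitoneOn.concaveOn_of_deriv (convex_Ici 1) continuousOn_arcosh ?_ ?_ <;>
    rw [interior_Ici]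
  · exact differentiableOn_arcosh
  · intro x hx y hy hxy
    rw [(hasDerivAt_arcosh hx).deriv, (hasDerivAt_arcosh hy).deriv]
    have hx1 : 1 < x := hx
    exact inv_anti₀ (sqrt_pos.2 (by nlinarith)) (sqrt_le_sqrt (by nlinarith))

theorem Real.concaveOn_arsinh : ConcaveOn ℝ (Ici 0) Real.arsinh := by
  refine AntitoneOn.concaveOn_of_deriv (convex_Ici 0) continuous_arsinh.continuousOn
    differentiable_arsinh.differentiableOn ?_
  rw [interior_Ici]
  intro x hx y hy hxy
  rw [(hasDerivAt_arsinh x).deriv, (hasDerivAt_arsinh y).deriv]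
  have hx0 : 0 < x := hx
  exact inv_anti₀ (sqrt_pos.2 (by positivity)) (sqrt_le_sqrt (by nlinarith))

theorem Real.mul_arsinh_le_arsinh_mul {y z : ℝ} (hy : 0 ≤ y) (hz₀ : 0 ≤ z) (hz₁ : z ≤ 1) :
    z * arsinh y ≤ arsinh (z * y) := by
  simpa using concaveOn_arsinh.2 (mem_Ici.2 hy) (mem_Ici.2 le_rfl) hz₀ (sub_nonneg.2 hz₁)
    (add_sub_cancel z 1)

theorem Real.arcosh_le_arcosh_add_mul_sub {v₀ v : ℝ} (hv₀ : 1 < v₀) (hv : 1 ≤ v) :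
    arcosh v ≤ arcosh v₀ + (√(v₀ ^ 2 - 1))⁻¹ * (v - v₀) :=
  concaveOn_arcosh.le_add_mul_sub_of_hasDerivAt hv₀.le hv (hasDerivAt_arcosh hv₀)

theorem Real.arcosh_one_add {u : ℝ} (hu : 0 ≤ u) : arcosh (1 + u) = 2 * arsinh √(u / 2) := by
  have hsinh : sinh (arsinh √(u / 2)) ^ 2 = u / 2 := by
    rw [sinh_arsinh, sq_sqrt (by positivity)]
  rw [show 1 + u = cosh (2 * arsinh √(u / 2)) by rw [cosh_two_mul, cosh_sq]; linarith,
    arcosh_cosh (mul_nonneg zero_le_two (arsinh_nonneg_iff.2 (sqrt_nonneg _)))]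

section F

variable {a b : ℝ}

theorem F_eq_two_mul_arsinh (ha : 0 < a) (hb : 0 < b) (x : ℝ) :
    F a b x = 2 * arsinh √((x ^ 2 + (a - b) ^ 2) / (4 * a * b)) := by
  show Real.arcosh _ = _
  rw [arcosh_one_add (by positivity), div_div]
  congr 4
  ring

theorem F_nonneg (ha : 0 < a) (hb : 0 < b) (x : ℝ) : 0 ≤ F a b x :=
  arcosh_nonneg (le_add_of_nonneg_right (by positivity))

theorem F_le_F_of_sq_le (ha : 0 < a) (hb : 0 < b) {x y : ℝ} (h : x ^ 2 ≤ y ^ 2) :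
    F a b x ≤ F a b y :=
  (arcosh_le_arcosh (by positivity) (by positivity)).2 (by gcongr)

theorem continuous_F (ha : 0 < a) (hb : 0 < b) : Continuous (F a b) :=
  continuousOn_arcosh.comp_continuous (f := fun r => 1 + (r ^ 2 + (a - b) ^ 2) / (2 * a * b))
    (by fun_prop) fun _ => mem_Ici.2 (le_add_of_nonneg_right (by positivity))

theorem mul_F_le_F_mul (ha : 0 < a) (hb : 0 < b) (s : ℝ) {z : ℝ} (hz₀ : 0 ≤ z) (hz₁ : z ≤ 1) :
    z * F a b s ≤ F a b (s * z) := by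
  have hsqrt : z * √((s ^ 2 + (a - b) ^ 2) / (4 * a * b))
      ≤ √(((s * z) ^ 2 + (a - b) ^ 2) / (4 * a * b)) := by
    rw [← sqrt_sq hz₀, ← sqrt_mul (sq_nonneg _), sqrt_sq hz₀, ← mul_div_assoc]
    gcongr
    nlinarith [sq_nonneg (a - b), mul_nonneg hz₀ (sub_nonneg.2 hz₁)]
  rw [F_eq_two_mul_arsinh ha hb, F_eq_two_mul_arsinh ha hb]
  calc z * (2 * arsinh √((s ^ 2 + (a - b) ^ 2) / (4 * a * b)))
      = 2 * (z * arsinh √((s ^ 2 + (a - b) ^ 2) / (4 * a * b))) := by ring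
    _ ≤ 2 * arsinh (z * √((s ^ 2 + (a - b) ^ 2) / (4 * a * b))) := by
      gcongr
      exact mul_arsinh_le_arsinh_mul (sqrt_nonneg _) hz₀ hz₁
    _ ≤ 2 * arsinh √(((s * z) ^ 2 + (a - b) ^ 2) / (4 * a * b)) := by
      gcongr

theorem exists_F_mul_le (ha : 0 < a) (hb : 0 < b) {s : ℝ} (hs : s ≠ 0) :
    ∃ C, ∀ z, F a b (s * z) ≤ F a b s + C * (z ^ 2 - 1) := by
  set v₀ := 1 + (s ^ 2 + (a - b) ^ 2) / (2 * a * b) with hv₀_def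
  have hv₀ : 1 < v₀ := lt_add_of_pos_right _ (by positivity)
  refine ⟨(√(v₀ ^ 2 - 1))⁻¹ * (s ^ 2 / (2 * a * b)), fun z => ?_⟩
  calc F a b (s * z)
      ≤ F a b s + (√(v₀ ^ 2 - 1))⁻¹ * (1 + ((s * z) ^ 2 + (a - b) ^ 2) / (2 * a * b) - v₀) :=
        arcosh_le_arcosh_add_mul_sub hv₀ (le_add_of_nonneg_right (by positivity))
    _ = F a b s + (√(v₀ ^ 2 - 1))⁻¹ * (s ^ 2 / (2 * a * b)) * (z ^ 2 - 1) := by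
      rw [hv₀_def]
      ring

end F

noncomputable def halfNormalPDF (z : ℝ) : ℝ := √(2 / π) * exp (-z ^ 2 / 2)

theorem halfNormalPDF_nonneg (z : ℝ) : 0 ≤ halfNormalPDF z := by
  unfold halfNormalPDF
  positivity

theorem continuous_halfNormalPDF : Continuous halfNormalPDF := by
  unfold halfNormalPDF
  fun_prop

theorem halfNormalPDF_eq (z : ℝ) : halfNormalPDF z = √(2 / π) * exp (-(1 / 2) * z ^ 2) := by
  rw [halfNormalPDF]
  ring_nf

theorem integrableOn_halfNormalPDF : IntegrableOn halfNormalPDF (Ioi 0) := by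
  simp_rw [funext halfNormalPDF_eq]
  exact (integrable_exp_neg_mul_sq (by norm_num)).integrableOn.const_mul _

theorem integrableOn_halfNormalPDF_mul_sq :
    IntegrableOn (fun z => halfNormalPDF z * z ^ 2) (Ioi 0) := by
  have := (integrableOn_rpow_mul_exp_neg_mul_sq (b := 1 / 2) (by norm_num)
    (by norm_num : (-1 : ℝ) < 2)).const_mul √(2 / π)
  refine IntegrableOn.congr_fun this (fun z _ => ?_) measurableSet_Ioi
  rw [halfNormalPDF_eq, rpow_two]
  ring

theorem integral_halfNormalPDF : ∫ z in Ioi 0, halfNormalPDF z = 1 := by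
  simp_rw [halfNormalPDF_eq]
  rw [integral_const_mul, integral_gaussian_Ioi, ← mul_div_assoc, ← sqrt_mul (by positivity)]
  rw [show 2 / π * (π / (1 / 2)) = 2 ^ 2 by field_simp, sqrt_sq zero_le_two]
  norm_num

theorem integral_halfNormalPDF_mul_sq : ∫ z in Ioi 0, halfNormalPDF z * z ^ 2 = 1 := by
  have hΓ : Gamma (3 / 2) = √π / 2 := by
    have := Gamma_nat_add_one_add_half 0
    norm_num at this
    exact this
  have hmoment := integral_rpow_mul_exp_neg_mul_rpow (p := 2) (q := 2) (b := 1 / 2)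
    (by norm_num) (by norm_num) (by norm_num)
  simp_rw [rpow_two] at hmoment
  have h : ∀ z, halfNormalPDF z * z ^ 2 = √(2 / π) * (z ^ 2 * exp (-(1 / 2) * z ^ 2)) :=
    fun z => by rw [halfNormalPDF_eq]; ring
  simp_rw [h]
  rw [integral_const_mul, hmoment, show (-(2 + 1) / 2 : ℝ) = -1 - 1 / 2 by norm_num,
    rpow_sub (by norm_num), rpow_neg_one, ← sqrt_eq_rpow,
    show (2 + 1) / 2 = (3 / 2 : ℝ) by norm_num, hΓ]
  have hπ : 0 < √π := sqrt_pos.2 pi_pos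
  norm_num
  field_simp
  exact sq_sqrt zero_le_two

theorem integral_Ioc_halfNormalPDF_mul_self :
    ∫ z in Ioc 0 1, halfNormalPDF z * z = √(2 / π) * (1 - exp (-1 / 2)) := by
  have hderiv : ∀ z ∈ uIcc (0 : ℝ) 1,
      HasDerivAt (fun t => -(√(2 / π) * exp (-t ^ 2 / 2))) (halfNormalPDF z * z) z := by
    intro z _
    exact (((hasDerivAt_pow 2 z).fun_neg.div_const 2).exp.const_mul √(2 / π)).fun_neg.congr_deriv
      (by rw [halfNormalPDF]; norm_num; ring)
  rw [← intervalIntegral.integral_of_le zero_le_one,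
    intervalIntegral.integral_eq_sub_of_hasDerivAt hderiv
      ((continuous_halfNormalPDF.mul continuous_id).intervalIntegrable 0 1)]
  norm_num
  ring

theorem alphaLSH_eq :
    alphaLSH = (∫ z in Ioc 0 1, halfNormalPDF z * z) + ∫ z in Ioi 1, halfNormalPDF z := by
  rw [integral_Ioc_halfNormalPDF_mul_self, alphaLSH]
  rfl

theorem alphaLSH_pos : 0 < alphaLSH := by
  have h₁ : 0 < √(2 / π) * (1 - exp (-1 / 2)) :=
    mul_pos (sqrt_pos.2 (by positivity)) (sub_pos.2 (exp_lt_one_iff.2 (by norm_num)))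
  have h₂ : 0 ≤ ∫ z in Ioi 1, halfNormalPDF z :=
    setIntegral_nonneg measurableSet_Ioi fun z _ => halfNormalPDF_nonneg z
  rw [alphaLSH_eq, integral_Ioc_halfNormalPDF_mul_self]
  linarith


section HalfNormalExpectation

variable {φ : ℝ → ℝ}

theorem integrableOn_halfNormalPDF_mul (hφ : AEStronglyMeasurable φ (volume.restrict (Ioi 0)))
    {A B : ℝ} (h₀ : ∀ z ∈ Ioi 0, 0 ≤ φ z) (hle : ∀ z ∈ Ioi 0, φ z ≤ A + B * z ^ 2) :
    IntegrableOn (fun z => halfNormalPDF z * φ z) (Ioi 0) := by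
  refine Integrable.mono' ((integrableOn_halfNormalPDF.const_mul A).add
    (integrableOn_halfNormalPDF_mul_sq.const_mul B))
    (continuous_halfNormalPDF.aestronglyMeasurable.mul hφ) ?_
  filter_upwards [ae_restrict_mem measurableSet_Ioi] with z hz
  rw [norm_of_nonneg (mul_nonneg (halfNormalPDF_nonneg z) (h₀ z hz))]
  calc halfNormalPDF z * φ z ≤ halfNormalPDF z * (A + B * z ^ 2) :=
        mul_le_mul_of_nonneg_left (hle z hz) (halfNormalPDF_nonneg z)
    _ = A * halfNormalPDF z + B * (halfNormalPDF z * z ^ 2) := by ring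

theorem integral_halfNormalPDF_mul_le {C : ℝ}
    (hint : IntegrableOn (fun z => halfNormalPDF z * φ z) (Ioi 0))
    (hle : ∀ z ∈ Ioi 0, φ z ≤ φ 1 + C * (z ^ 2 - 1)) :
    ∫ z in Ioi 0, halfNormalPDF z * φ z ≤ φ 1 := by
  have htangent : ∀ z, halfNormalPDF z * (φ 1 + C * (z ^ 2 - 1))
      = (φ 1 - C) * halfNormalPDF z + C * (halfNormalPDF z * z ^ 2) := fun z => by ring
  have hint' := (integrableOn_halfNormalPDF.const_mul (φ 1 - C)).add
    (integrableOn_halfNormalPDF_mul_sq.const_mul C)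
  calc ∫ z in Ioi 0, halfNormalPDF z * φ z
      ≤ ∫ z in Ioi 0, halfNormalPDF z * (φ 1 + C * (z ^ 2 - 1)) := by
        refine setIntegral_mono_on hint ?_ measurableSet_Ioi fun z hz =>
          mul_le_mul_of_nonneg_left (hle z hz) (halfNormalPDF_nonneg z)
        simp_rw [htangent]
        exact hint'
    _ = φ 1 := by
        simp_rw [htangent]
        rw [integral_add (integrableOn_halfNormalPDF.const_mul _)
          (integrableOn_halfNormalPDF_mul_sq.const_mul _), integral_const_mul, integral_const_mul,
          integral_halfNormalPDF, integral_halfNormalPDF_mul_sq]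
        ring

theorem alphaLSH_mul_le_integral_halfNormalPDF_mul
    (hint : IntegrableOn (fun z => halfNormalPDF z * φ z) (Ioi 0))
    (hsmall : ∀ z ∈ Ioc 0 1, z * φ 1 ≤ φ z) (hlarge : ∀ z ∈ Ioi 1, φ 1 ≤ φ z) :
    alphaLSH * φ 1 ≤ ∫ z in Ioi 0, halfNormalPDF z * φ z := by
  have hIoi : Ioi (1 : ℝ) ⊆ Ioi 0 := Ioi_subset_Ioi zero_le_one
  have hsmall' : (∫ z in Ioc 0 1, halfNormalPDF z * z) * φ 1
      ≤ ∫ z in Ioc 0 1, halfNormalPDF z * φ z := by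
    rw [← integral_mul_const]
    refine setIntegral_mono_on ?_ (hint.mono_set Ioc_subset_Ioi_self) measurableSet_Ioc
      fun z hz => ?_
    · exact ((continuous_halfNormalPDF.mul continuous_id).integrableOn_Ioc).mul_const _
    · rw [mul_assoc]
      exact mul_le_mul_of_nonneg_left (hsmall z hz) (halfNormalPDF_nonneg z)
  have hlarge' : (∫ z in Ioi 1, halfNormalPDF z) * φ 1 ≤ ∫ z in Ioi 1, halfNormalPDF z * φ z := by
    rw [← integral_mul_const]
    exact setIntegral_mono_on ((integrableOn_halfNormalPDF.mono_set hIoi).mul_const _)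
      (hint.mono_set hIoi) measurableSet_Ioi
      fun z hz => mul_le_mul_of_nonneg_left (hlarge z hz) (halfNormalPDF_nonneg z)
  rw [← Ioc_union_Ioi_eq_Ioi zero_le_one, setIntegral_union (Ioc_disjoint_Ioi le_rfl)
    measurableSet_Ioi (hint.mono_set Ioc_subset_Ioi_self) (hint.mono_set hIoi), alphaLSH_eq]
  linarith

end HalfNormalExpectation

section FIntegral

variable {a b s : ℝ}

theorem integrableOn_halfNormalPDF_mul_F (ha : 0 < a) (hb : 0 < b) (hs : s ≠ 0) :
    IntegrableOn (fun z => halfNormalPDF z * F a b (s * z)) (Ioi 0) := by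
  obtain ⟨C, hC⟩ := exists_F_mul_le ha hb hs
  exact integrableOn_halfNormalPDF_mul
    ((continuous_F ha hb).comp (continuous_const_mul s)).aestronglyMeasurable
    (A := F a b s - C) (B := C) (fun z _ => F_nonneg ha hb _) fun z _ => by linarith [hC z]

theorem integral_halfNormalPDF_mul_F_le (ha : 0 < a) (hb : 0 < b) (hs : s ≠ 0) :
    ∫ z in Ioi 0, halfNormalPDF z * F a b (s * z) ≤ F a b s := by
  obtain ⟨C, hC⟩ := exists_F_mul_le ha hb hs
  simpa using integral_halfNormalPDF_mul_le (φ := fun z => F a b (s * z))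
    (integrableOn_halfNormalPDF_mul_F ha hb hs) (C := C) fun z _ => by simpa using hC z

theorem alphaLSH_mul_F_le_integral (ha : 0 < a) (hb : 0 < b) (hs : s ≠ 0) :
    alphaLSH * F a b s ≤ ∫ z in Ioi 0, halfNormalPDF z * F a b (s * z) := by
  simpa using alphaLSH_mul_le_integral_halfNormalPDF_mul (φ := fun z => F a b (s * z))
    (integrableOn_halfNormalPDF_mul_F ha hb hs)
    (fun z hz => by simpa using mul_F_le_F_mul ha hb s hz.1.le hz.2)
    fun z hz => by
      simpa using F_le_F_of_sq_le ha hb (by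
        rw [mul_pow]
        exact le_mul_of_one_le_right (sq_nonneg s) (one_le_pow₀ (mem_Ioi.1 hz).le))

end FIntegral

theorem log_inv_div_log_inv_le {x κ p₁ p₂ : ℝ} (hx : 0 ≤ x) (hκ : 1 ≤ κ) (hκx : κ * x < 1)
    (hp₁ : 1 - x ≤ p₁) (hp₂ : 0 < p₂) (hp₂' : p₂ ≤ 1 - κ * x) :
    log (1 / p₁) / log (1 / p₂) ≤ 1 / κ := by
  have hx₁ : 0 < 1 - x := by nlinarith
  have hbernoulli : log (1 - κ * x) ≤ κ * log (1 - x) := by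
    rw [← log_rpow hx₁]
    refine log_le_log (by linarith) ?_
    simpa [sub_eq_add_neg] using one_add_mul_self_le_rpow_one_add (by linarith : -1 ≤ -x) hκ
  have hlog₁ : log (1 / p₁) ≤ -log (1 - x) := by
    rw [one_div, log_inv, neg_le_neg_iff]
    exact log_le_log hx₁ hp₁
  have hlog₂ : -log (1 - κ * x) ≤ log (1 / p₂) := by
    rw [one_div, log_inv, neg_le_neg_iff]
    exact log_le_log hp₂ hp₂'
  have hlog₂_nonneg : 0 ≤ -log (1 - κ * x) :=
    neg_nonneg.2 (log_nonpos (by linarith) (by nlinarith))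
  refine div_le_of_le_mul₀ (hlog₂_nonneg.trans hlog₂) (by positivity) ?_
  rw [one_div_mul_eq_div, le_div_iff₀ (by linarith)]
  calc log (1 / p₁) * κ ≤ -log (1 - x) * κ := mul_le_mul_of_nonneg_right hlog₁ (by linarith)
    _ ≤ -log (1 - κ * x) := by linarith
    _ ≤ log (1 / p₂) := hlog₂

/-- Quantitative core of Theorem 1.6: with collision probabilities `p₁, p₂` of the
Gaussian-projection-plus-random-geodesic LSH scheme for pairs at hyperbolic
distance `r` and `≥ c·r` respectively, one has `0 < p₂ < p₁ < 1` and
`log(1/p₁)/log(1/p₂) ≤ 1/(α·c)`. -/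
theorem lsh_hyperbolic_high_dim_exponent
    (c : ℝ) (hc : 1 / alphaLSH < c)
    (z₁ z₂ z₁' z₂' s s' w : ℝ)
    (hz₁ : 0 < z₁) (hz₂ : 0 < z₂) (hz₁' : 0 < z₁') (hz₂' : 0 < z₂')
    (hs : 0 < s) (hs' : 0 < s') (hw : 0 < w)
    (hr : 0 < F z₁ z₂ s)
    (hfar : c * F z₁ z₂ s ≤ F z₁' z₂' s')
    (hlt : F z₁' z₂' s' < w) :
    (0 < 1 - (1 / w) * ∫ z in Set.Ioi (0 : ℝ),
        Real.sqrt (2 / π) * Real.exp (-z ^ 2 / 2) * F z₁' z₂' (s' * z)) ∧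
    (1 - (1 / w) * ∫ z in Set.Ioi (0 : ℝ),
        Real.sqrt (2 / π) * Real.exp (-z ^ 2 / 2) * F z₁' z₂' (s' * z)) <
      (1 - (1 / w) * ∫ z in Set.Ioi (0 : ℝ),
        Real.sqrt (2 / π) * Real.exp (-z ^ 2 / 2) * F z₁ z₂ (s * z)) ∧
    (1 - (1 / w) * ∫ z in Set.Ioi (0 : ℝ),
        Real.sqrt (2 / π) * Real.exp (-z ^ 2 / 2) * F z₁ z₂ (s * z)) < 1 ∧
    Real.log (1 / (1 - (1 / w) * ∫ z in Set.Ioi (0 : ℝ),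
        Real.sqrt (2 / π) * Real.exp (-z ^ 2 / 2) * F z₁ z₂ (s * z))) /
      Real.log (1 / (1 - (1 / w) * ∫ z in Set.Ioi (0 : ℝ),
        Real.sqrt (2 / π) * Real.exp (-z ^ 2 / 2) * F z₁' z₂' (s' * z))) ≤
      1 / (alphaLSH * c) := by
  have hκ : 1 < alphaLSH * c := by rwa [div_lt_iff₀ alphaLSH_pos, mul_comm] at hc
  set I₁ := ∫ z in Ioi (0 : ℝ), √(2 / π) * exp (-z ^ 2 / 2) * F z₁ z₂ (s * z)
  set I₂ := ∫ z in Ioi (0 : ℝ), √(2 / π) * exp (-z ^ 2 / 2) * F z₁' z₂' (s' * z)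
  have hI₁_pos : 0 < I₁ :=
    (mul_pos alphaLSH_pos hr).trans_le (alphaLSH_mul_F_le_integral hz₁ hz₂ hs.ne')
  have hI₁_le : I₁ ≤ F z₁ z₂ s := integral_halfNormalPDF_mul_F_le hz₁ hz₂ hs.ne'
  have hI₂_ge : alphaLSH * c * F z₁ z₂ s ≤ I₂ := by
    rw [mul_assoc]
    exact (mul_le_mul_of_nonneg_left hfar alphaLSH_pos.le).trans
      (alphaLSH_mul_F_le_integral hz₁' hz₂' hs'.ne')
  have hI₂_lt : I₂ < w := (integral_halfNormalPDF_mul_F_le hz₁' hz₂' hs'.ne').trans_lt hlt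
  have hp₂_pos : 0 < 1 - 1 / w * I₂ := by
    rw [one_div_mul_eq_div, sub_pos, div_lt_one hw]
    exact hI₂_lt
  have hI₁_lt_I₂ : I₁ < I₂ := hI₁_le.trans_lt ((lt_mul_of_one_lt_left hr hκ).trans_le hI₂_ge)
  refine ⟨hp₂_pos, by gcongr, sub_lt_self _ (mul_pos (one_div_pos.2 hw) hI₁_pos), ?_⟩
  refine log_inv_div_log_inv_le (x := F z₁ z₂ s / w) (div_nonneg hr.le hw.le) hκ.le ?_ ?_
    hp₂_pos ?_
  · rw [mul_div_assoc', div_lt_one hw]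
    linarith
  · rw [one_div_mul_eq_div]
    gcongr
  · rw [one_div_mul_eq_div, mul_div_assoc']
    gcongr
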